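/- Let X be a real random variable satisfying condition (bern1) with constants D, M > 0. Then there exists a positive constant C₂ depending only on D (and not on M) such that for every complex u with |u| ≤ 1/(8M) and every complex v with |v| ≤ 1/2, |E e^{uX − v²/2} − 1 − u E X| ≤ C₂ (|u|² E X² + |v|²). -/

import Mathlib

/-!
Condition (bern1) with `s = 2` bounds every moment `E X^k`, `k ≥ 2`, by `D k! M^(k-2) E X²`.
Applied to the even moments and combined with Cauchy–Schwarz, it also gives
`E|X|^k ≤ 2^k k! M^(k-1) √(D E X²)`, so for `|u| < 1/(2M)` the exponential series may be integrated
term by term: `E e^{uX} = ∑ u^k E X^k / k!`. Beyond the linear term this series is dominated by the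
geometric series `D |u|² E X² ∑ (|u| M)^j`. The Gaussian factor `e^{-v²/2}` only contributes
`|e^{-v²/2} - 1| ≤ |v|²` times `|1 + u E X|`, and `|u E X| ≤ |u| √(E X²)` is absorbed by AM-GM.
-/

open MeasureTheory Real Nat

theorem Nat.factorial_two_mul_le_four_pow_mul_sq (n : ℕ) : (2 * n)! ≤ 4 ^ n * n ! ^ 2 := by
  rw [two_mul, ← Nat.add_choose_mul_factorial_mul_factorial n n, ← two_mul,
    ← centralBinom_eq_two_mul_choose, mul_assoc, ← sq]
  exact Nat.mul_le_mul_right _ (centralBinom_le_four_pow n)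

theorem ProbabilityTheory.sq_integral_le_integral_sq {Ω : Type*} [MeasurableSpace Ω]
    {μ : Measure Ω} [IsProbabilityMeasure μ] {f : Ω → ℝ} (hf : MemLp f 2 μ) :
    (∫ ω, f ω ∂μ) ^ 2 ≤ ∫ ω, f ω ^ 2 ∂μ := by
  have := variance_nonneg f μ
  rw [variance_eq_sub hf] at this
  simpa using this

theorem Complex.norm_exp_neg_sq_div_two_sub_one_le {v : ℂ} (hv : ‖v‖ ≤ 1) :
    ‖exp (-(v ^ 2 / 2)) - 1‖ ≤ ‖v‖ ^ 2 := by
  have hv2 : ‖-(v ^ 2 / 2)‖ = ‖v‖ ^ 2 / 2 := by simp [norm_pow]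
  calc ‖exp (-(v ^ 2 / 2)) - 1‖ ≤ 2 * ‖-(v ^ 2 / 2)‖ :=
        norm_exp_sub_one_le (by rw [hv2]; nlinarith [norm_nonneg v])
    _ = ‖v‖ ^ 2 := by rw [hv2]; ring

theorem norm_mul_sub_one_sub_le {z w b : ℂ} {r s E : ℝ} (hz : ‖z - 1 - b‖ ≤ E)
    (hw : ‖w - 1‖ ≤ r ^ 2) (hr : 0 ≤ r) (hr1 : r ≤ 1 / 2) (hb : ‖b‖ ^ 2 ≤ s) :
    ‖z * w - 1 - b‖ ≤ 5 / 4 * E + 5 / 4 * r ^ 2 + s / 4 := by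
  have hw' : ‖w‖ ≤ 5 / 4 := by
    calc ‖w‖ = ‖(w - 1) + 1‖ := by ring_nf
      _ ≤ r ^ 2 + 1 := (norm_add_le _ _).trans (by simpa using hw)
      _ ≤ 5 / 4 := by nlinarith
  have hrb : r ^ 2 * ‖b‖ ≤ (r ^ 2 + s) / 4 := by nlinarith [sq_nonneg (r - ‖b‖), norm_nonneg b]
  calc ‖z * w - 1 - b‖ = ‖(z - 1 - b) * w + (w - 1) * (1 + b)‖ := by ring_nf
    _ ≤ ‖z - 1 - b‖ * ‖w‖ + ‖w - 1‖ * (1 + ‖b‖) := by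
        grw [norm_add_le, norm_mul, norm_mul, norm_add_le, norm_one]
    _ ≤ E * (5 / 4) + r ^ 2 * (1 + ‖b‖) := by gcongr; exact (norm_nonneg _).trans hz
    _ ≤ 5 / 4 * E + 5 / 4 * r ^ 2 + s / 4 := by nlinarith

section Moments

variable {Ω : Type*} [MeasurableSpace Ω] {μ : Measure Ω} {X : Ω → ℝ} {D M : ℝ}

/-- Condition (bern1) for `s = 2`, with `|X|²` written as `X²`. -/
def BernsteinMomentBound (X : Ω → ℝ) (μ : Measure Ω) (D M : ℝ) : Prop :=
  ∀ k, 2 ≤ k → |∫ ω, X ω ^ k ∂μ| ≤ D * k ! * M ^ (k - 2) * ∫ ω, X ω ^ 2 ∂μ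

theorem hasSum_integral_cexp_mul (hX : ∀ k, Integrable (fun ω => X ω ^ k) μ) {u : ℂ}
    (hu : Summable fun k => ‖u‖ ^ k * (∫ ω, |X ω| ^ k ∂μ) / k !) :
    HasSum (fun k => u ^ k * (∫ ω, X ω ^ k ∂μ : ℝ) / k !) (∫ ω, Complex.exp (u * X ω) ∂μ) := by
  have hint : ∀ k, Integrable (fun ω => (u * X ω) ^ k / k !) μ := fun k => by
    simpa [mul_pow, mul_div_assoc] using
      ((hX k).ofReal (𝕜 := ℂ)).const_mul (u ^ k) |>.div_const (k ! : ℂ)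
  have hnorm : ∀ k, ∫ ω, ‖(u * X ω) ^ k / (k ! : ℂ)‖ ∂μ
      = ‖u‖ ^ k * (∫ ω, |X ω| ^ k ∂μ) / k ! := fun k => by
    simp [norm_pow, integral_div, integral_const_mul, mul_pow]
  have h := hasSum_integral_of_summable_integral_norm hint (by simpa only [hnorm] using hu)
  have hexp : ∀ ω, ∑' k, (u * X ω) ^ k / (k ! : ℂ) = Complex.exp (u * X ω) := fun ω => by
    rw [Complex.exp_eq_exp_ℂ, NormedSpace.exp_eq_tsum_div]
  have hterm : ∀ k, ∫ ω, (u * X ω) ^ k / (k ! : ℂ) ∂μ = u ^ k * (∫ ω, X ω ^ k ∂μ : ℝ) / k ! :=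
    fun k => by simp_rw [mul_pow, integral_div, integral_const_mul, ← Complex.ofReal_pow,
      integral_complex_ofReal]
  simpa only [hexp, hterm] using h

namespace BernsteinMomentBound

variable [IsProbabilityMeasure μ]

theorem integral_abs_pow_succ_le (hB : BernsteinMomentBound X μ D M) (hD : 0 ≤ D) (hM : 0 ≤ M)
    (hX : ∀ k, Integrable (fun ω => X ω ^ k) μ) (k : ℕ) :
    ∫ ω, |X ω| ^ (k + 1) ∂μ ≤ 2 ^ (k + 1) * (k + 1)! * M ^ k * √(D * ∫ ω, X ω ^ 2 ∂μ) := by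
  set m₂ := ∫ ω, X ω ^ 2 ∂μ
  have hsq_pow : ∀ ω, (|X ω| ^ (k + 1)) ^ 2 = X ω ^ (2 * k + 2) := fun ω => by
    rw [← pow_mul, pow_mul', sq_abs, ← pow_mul]; ring_nf
  have hL2 : MemLp (fun ω => |X ω| ^ (k + 1)) 2 μ := by
    refine (memLp_two_iff_integrable_sq ?_).2 ((hX (2 * k + 2)).congr (ae_of_all _ fun ω => ?_))
    · simpa only [abs_pow] using (hX (k + 1)).abs.aestronglyMeasurable
    · exact (hsq_pow ω).symm
  have hsq : (∫ ω, |X ω| ^ (k + 1) ∂μ) ^ 2 ≤ D * m₂ * (2 ^ (k + 1) * (k + 1)! * M ^ k) ^ 2 :=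
    calc (∫ ω, |X ω| ^ (k + 1) ∂μ) ^ 2 ≤ ∫ ω, (|X ω| ^ (k + 1)) ^ 2 ∂μ :=
          ProbabilityTheory.sq_integral_le_integral_sq hL2
      _ = ∫ ω, X ω ^ (2 * k + 2) ∂μ := by simp_rw [hsq_pow]
      _ ≤ D * (2 * k + 2)! * M ^ (2 * k) * m₂ := (le_abs_self _).trans (hB _ (by omega))
      _ ≤ D * (4 ^ (k + 1) * (k + 1)! ^ 2) * M ^ (2 * k) * m₂ := by
          gcongr; exact_mod_cast factorial_two_mul_le_four_pow_mul_sq (k + 1)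
      _ = D * m₂ * (2 ^ (k + 1) * (k + 1)! * M ^ k) ^ 2 := by
          rw [show (4 : ℝ) ^ (k + 1) = (2 ^ (k + 1)) ^ 2 by
            rw [← pow_mul, mul_comm, pow_mul]; norm_num]
          ring
  calc ∫ ω, |X ω| ^ (k + 1) ∂μ = √((∫ ω, |X ω| ^ (k + 1) ∂μ) ^ 2) :=
        (sqrt_sq (integral_nonneg fun _ => by positivity)).symm
    _ ≤ √(D * m₂ * (2 ^ (k + 1) * (k + 1)! * M ^ k) ^ 2) := sqrt_le_sqrt hsq
    _ = 2 ^ (k + 1) * (k + 1)! * M ^ k * √(D * m₂) := by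
        rw [sqrt_mul (by positivity), sqrt_sq (by positivity), mul_comm]

theorem summable_abs_moment_series (hB : BernsteinMomentBound X μ D M) (hD : 0 ≤ D) (hM : 0 ≤ M)
    (hX : ∀ k, Integrable (fun ω => X ω ^ k) μ) {c : ℝ} (hc : 0 ≤ c) (hcM : 2 * c * M < 1) :
    Summable fun k => c ^ k * (∫ ω, |X ω| ^ k ∂μ) / k ! := by
  rw [← summable_nat_add_iff 1]
  refine Summable.of_nonneg_of_le
    (fun k => div_nonneg (mul_nonneg (by positivity) (integral_nonneg fun ω => by positivity))
      (by positivity)) (fun k => ?_)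
    ((summable_geometric_of_lt_one (by positivity) hcM).mul_left (2 * c * √(D * ∫ ω, X ω ^ 2 ∂μ)))
  calc c ^ (k + 1) * (∫ ω, |X ω| ^ (k + 1) ∂μ) / (k + 1)!
      ≤ c ^ (k + 1) * (2 ^ (k + 1) * (k + 1)! * M ^ k * √(D * ∫ ω, X ω ^ 2 ∂μ)) / (k + 1)! := by
        gcongr; exact hB.integral_abs_pow_succ_le hD hM hX k
    _ = 2 * c * √(D * ∫ ω, X ω ^ 2 ∂μ) * (2 * c * M) ^ k := by
        field_simp; ring

theorem norm_integral_cexp_sub_one_sub_le (hB : BernsteinMomentBound X μ D M) (hD : 0 ≤ D)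
    (hM : 0 ≤ M) (hX : ∀ k, Integrable (fun ω => X ω ^ k) μ) {u : ℂ} (hu : ‖u‖ * M ≤ 1 / 4) :
    ‖∫ ω, Complex.exp (u * X ω) ∂μ - 1 - u * (∫ ω, X ω ∂μ : ℝ)‖
      ≤ 2 * D * ‖u‖ ^ 2 * ∫ ω, X ω ^ 2 ∂μ := by
  have hS := hasSum_integral_cexp_mul hX
    (hB.summable_abs_moment_series hD hM hX (norm_nonneg u) (by linarith))
  have hTail := (hasSum_nat_add_iff' 2).mpr hS
  simp only [Finset.sum_range_succ, Finset.sum_range_zero, pow_zero, pow_one, integral_const,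
    probReal_univ, smul_eq_mul, mul_one, Complex.ofReal_one, factorial_zero, factorial_one,
    cast_one, div_one, zero_add] at hTail
  rw [sub_sub]
  refine (hTail.norm_le_of_bounded (hasSum_geometric_two.mul_left
    (D * ‖u‖ ^ 2 * ∫ ω, X ω ^ 2 ∂μ)) fun j => ?_).trans_eq (by ring)
  rw [norm_div, norm_mul, norm_pow, Complex.norm_real, Complex.norm_natCast, norm_eq_abs]
  calc ‖u‖ ^ (j + 2) * |∫ ω, X ω ^ (j + 2) ∂μ| / (j + 2)!
      ≤ ‖u‖ ^ (j + 2) * (D * (j + 2)! * M ^ j * ∫ ω, X ω ^ 2 ∂μ) / (j + 2)! := by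
        gcongr; simpa using hB (j + 2) (by omega)
    _ = D * ‖u‖ ^ 2 * (∫ ω, X ω ^ 2 ∂μ) * (‖u‖ * M) ^ j := by field_simp; ring
    _ ≤ D * ‖u‖ ^ 2 * (∫ ω, X ω ^ 2 ∂μ) * (1 / 2) ^ j := by gcongr; linarith

end BernsteinMomentBound

end Moments

/-- Lemma 1, second inequality: if a real random variable `X` satisfies the Bernstein-type
condition (bern1) with constants `D, M > 0`, then there is a constant `C₂ > 0` depending
only on `D` (not on `M`) such that for all complex `u, v` with `|u| ≤ 1/(8M)`, `|v| ≤ 1/2`,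
`|E e^{uX − v²/2} − 1 − u E X| ≤ C₂ (|u|² E X² + |v|²)`. -/
theorem mgf_expansion_second_order (D : ℝ) (hD : 0 < D) :
    ∃ C₂ > (0 : ℝ),
      ∀ (Ω : Type) (_ : MeasurableSpace Ω) (μ : Measure Ω), IsProbabilityMeasure μ →
      ∀ (X : Ω → ℝ), Measurable X →
      (∀ k : ℕ, Integrable (fun ω => |X ω| ^ k) μ) →
      ∀ (M : ℝ), 0 < M →
      (∀ s ∈ ({1, 2, 3} : Set ℕ), ∀ k : ℕ, s ≤ k →
        |∫ ω, X ω ^ k ∂μ| ≤ D * (Nat.factorial k) * M ^ (k - s) * ∫ ω, |X ω| ^ s ∂μ) →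
      ∀ (u v : ℂ), ‖u‖ ≤ 1 / (8 * M) → ‖v‖ ≤ 1 / 2 →
        ‖(∫ ω, Complex.exp (u * (X ω : ℂ) - v ^ 2 / 2) ∂μ) - 1 - u * (∫ ω, X ω ∂μ : ℝ)‖
          ≤ C₂ * (‖u‖ ^ 2 * ∫ ω, (X ω) ^ 2 ∂μ + ‖v‖ ^ 2) := by
  refine ⟨3 * D + 2, by positivity, ?_⟩
  intro Ω _ μ _ X hX hInt M hM hbern u v hu hv
  have hpow : ∀ k, Integrable (fun ω => X ω ^ k) μ := fun k =>
    (hInt k).mono' (hX.pow_const k).aestronglyMeasurable (ae_of_all _ fun ω => by simp)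
  have hB : BernsteinMomentBound X μ D M := fun k hk => by
    simpa [sq_abs] using hbern 2 (by simp) k hk
  have huM : ‖u‖ * M ≤ 1 / 8 := by
    have := (le_div_iff₀ (by positivity)).1 hu
    linarith
  have hm₁ : ‖u * ((∫ ω, X ω ∂μ : ℝ) : ℂ)‖ ^ 2 ≤ ‖u‖ ^ 2 * ∫ ω, X ω ^ 2 ∂μ := by
    rw [norm_mul, Complex.norm_real, mul_pow, norm_eq_abs, sq_abs]
    gcongr
    exact ProbabilityTheory.sq_integral_le_integral_sq
      ((memLp_two_iff_integrable_sq hX.aestronglyMeasurable).2 (hpow 2))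
  have hfactor : ∫ ω, Complex.exp (u * X ω - v ^ 2 / 2) ∂μ
      = (∫ ω, Complex.exp (u * X ω) ∂μ) * Complex.exp (-(v ^ 2 / 2)) := by
    simp_rw [sub_eq_add_neg, Complex.exp_add, integral_mul_const]
  rw [hfactor]
  refine (norm_mul_sub_one_sub_le
    (hB.norm_integral_cexp_sub_one_sub_le hD.le hM.le hpow (by linarith))
    (Complex.norm_exp_neg_sq_div_two_sub_one_le (by linarith)) (norm_nonneg v) hv hm₁).trans ?_
  have hm₂ : 0 ≤ ‖u‖ ^ 2 * ∫ ω, X ω ^ 2 ∂μ :=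
    mul_nonneg (sq_nonneg _) (integral_nonneg fun ω => sq_nonneg (X ω))
  nlinarith [mul_nonneg hD.le hm₂, mul_nonneg hD.le (sq_nonneg ‖v‖)]
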